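/- Fixed-period API performance bound: for all m ≥ 1 and all k ≥ m, ‖v_* − v_{π_{k,m}}‖_∞ ≤ γ^{k−m} ‖v_* − v_{π_{m,m}}‖_∞ + (2(γ − γ^{k+1−m}) / ((1 − γ)(1 − γ^m))) ε. -/

import Mathlib

open Finset Filter

variable {S A : Type*} [Fintype S] [Nonempty S] [DecidableEq S] [Fintype A] [Nonempty A]

/-- `P s a s'` is the probability of moving to `s'` when taking action `a` in state `s`. -/
def IsStochastic (P : S → A → S → ℝ) : Prop :=
  (∀ s a s', 0 ≤ P s a s') ∧ ∀ s a, ∑ s', P s a s' = 1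

/-- Bellman operator `T_π` of a stationary deterministic policy `π`. -/
noncomputable def Tpol (P : S → A → S → ℝ) (r : S → A → ℝ) (γ : ℝ)
    (π : S → A) (v : S → ℝ) : S → ℝ :=
  fun s => r s (π s) + γ * ∑ s', P s (π s) s' * v s'

/-- Bellman optimality operator `T`. -/
noncomputable def Topt (P : S → A → S → ℝ) (r : S → A → ℝ) (γ : ℝ) (v : S → ℝ) : S → ℝ :=
  fun s => univ.sup' univ_nonempty (fun a => r s a + γ * ∑ s', P s a s' * v s')

/-- Application of the transition matrix `P_π` to a value function. -/
noncomputable def Pap (P : S → A → S → ℝ) (π : S → A) (v : S → ℝ) : S → ℝ :=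
  fun s => ∑ s', P s (π s) s' * v s'

/-- `Tcomp P r γ πs k m = T_{π_k} T_{π_{k-1}} ⋯ T_{π_{k-m+1}}`. -/
noncomputable def Tcomp (P : S → A → S → ℝ) (r : S → A → ℝ) (γ : ℝ)
    (πs : ℕ → S → A) : ℕ → ℕ → (S → ℝ) → (S → ℝ)
  | _, 0, v => v
  | k, m+1, v => Tpol P r γ (πs k) (Tcomp P r γ πs (k-1) m v)

/-- `Gap P γ πs k m = (γP_{π_k})(γP_{π_{k-1}})⋯(γP_{π_{k-m+1}})` applied to a value function. -/
noncomputable def Gap (P : S → A → S → ℝ) (γ : ℝ)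
    (πs : ℕ → S → A) : ℕ → ℕ → (S → ℝ) → (S → ℝ)
  | _, 0, v => v
  | k, m+1, v => γ • Pap P (πs k) (Gap P γ πs (k-1) m v)

/-! The error `v_* - v_k` (with `v_k = v_{π_{k,m}}`) is nonnegative, and it contracts by `γ` per
iteration up to the additive term `2γε / (1 - γ^m)`. Indeed `v_* = T_{π_*} v_* ≤ T v_k + γ‖v_* - v_k‖`,
and the `ε`-greedy choice gives `T v_k ≤ T_{π_{k+1}} v_k + 2γε`. The remaining gap
`y = T_{π_{k+1}} v_k - v_{k+1}` is `(γP)^m` applied to `T_{π_{k+1-m}} v_k - v_{k+1} ≤ max y + 2γε`,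
because `T_{π_{k+1}} v_k` is `T_{π_{k+1}} ⋯ T_{π_{k+2-m}}` applied to `T_{π_{k+1-m}} v_k` and `v_{k+1}` is
the fixed point of the same composition; hence `max y ≤ γ^m (max y + 2γε)`. Unrolling the resulting
recursion gives a geometric sum. -/

section TransitionOperators

omit [Nonempty S] [DecidableEq S] [Fintype A] [Nonempty A]

variable {P : S → A → S → ℝ} {r : S → A → ℝ} {γ : ℝ}

lemma IsStochastic.Pap_le_of_le (hP : IsStochastic P) (π : S → A) {u : S → ℝ} {c : ℝ}
    (h : ∀ s, u s ≤ c) (s : S) : Pap P π u s ≤ c :=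
  calc Pap P π u s ≤ ∑ s', P s (π s) s' * c :=
        sum_le_sum fun s' _ => mul_le_mul_of_nonneg_left (h s') (hP.1 _ _ _)
    _ = c := by rw [← sum_mul, hP.2, one_mul]

lemma IsStochastic.Pap_le_norm (hP : IsStochastic P) (π : S → A) (u : S → ℝ) (s : S) :
    Pap P π u s ≤ ‖u‖ :=
  hP.Pap_le_of_le π (fun s' => (Real.le_norm_self _).trans (norm_le_pi_norm u s')) s

lemma Tpol_add (π : S → A) (u w : S → ℝ) (s : S) :
    Tpol P r γ π (u + w) s = Tpol P r γ π u s + γ * Pap P π w s := by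
  simp only [Tpol, Pap, Pi.add_apply, mul_add, sum_add_distrib]
  ring

lemma IsStochastic.Tpol_le_add_norm (hP : IsStochastic P) (hγ : 0 ≤ γ) (π : S → A)
    (u w : S → ℝ) (s : S) : Tpol P r γ π u s ≤ Tpol P r γ π w s + γ * ‖u - w‖ := by
  rw [← add_sub_cancel w u, Tpol_add, add_sub_cancel]
  gcongr
  exact hP.Pap_le_norm π _ s

lemma IsStochastic.Gap_le (hP : IsStochastic P) (hγ : 0 ≤ γ) (πs : ℕ → S → A) {u : S → ℝ}
    {c : ℝ} (h : ∀ s, u s ≤ c) : ∀ (n k : ℕ) (s : S), Gap P γ πs k n u s ≤ γ ^ n * c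
  | 0, _, s => by simpa [Gap] using h s
  | n + 1, k, s => by
    rw [Gap, Pi.smul_apply, smul_eq_mul, pow_succ', mul_assoc]
    exact mul_le_mul_of_nonneg_left (hP.Pap_le_of_le _ (hP.Gap_le hγ πs h n (k - 1)) s) hγ

lemma Tcomp_eq_add_Gap (πs : ℕ → S → A) : ∀ (n k : ℕ) (u w : S → ℝ) (s : S),
    Tcomp P r γ πs k n u s = Tcomp P r γ πs k n w s + Gap P γ πs k n (u - w) s
  | 0, _, u, w, s => by simp [Tcomp, Gap]
  | n + 1, k, u, w, s => by
    have h : Tcomp P r γ πs (k - 1) n u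
        = Tcomp P r γ πs (k - 1) n w + Gap P γ πs (k - 1) n (u - w) :=
      funext (Tcomp_eq_add_Gap πs n (k - 1) u w)
    rw [Tcomp, Tcomp, h, Tpol_add]
    rfl

lemma Tcomp_succ_eq_Tcomp_Tpol (πs : ℕ → S → A) : ∀ (n k : ℕ) (v : S → ℝ),
    Tcomp P r γ πs k (n + 1) v = Tcomp P r γ πs k n (Tpol P r γ (πs (k - n)) v)
  | 0, _, _ => rfl
  | n + 1, k, v => by
    rw [Tcomp, Tcomp_succ_eq_Tcomp_Tpol πs n (k - 1) v, Nat.sub_sub, Nat.add_comm 1 n]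
    rfl

end TransitionOperators

section Optimality

omit [Nonempty S] [DecidableEq S]

variable {P : S → A → S → ℝ} {r : S → A → ℝ} {γ : ℝ}

lemma Tpol_le_Topt (π : S → A) (v : S → ℝ) (s : S) : Tpol P r γ π v s ≤ Topt P r γ v s :=
  le_sup' (fun a => r s a + γ * ∑ s', P s a s' * v s') (mem_univ (π s))

lemma exists_Tpol_eq_Topt (v : S → ℝ) : ∃ π : S → A, Tpol P r γ π v = Topt P r γ v := by
  choose π hπ using fun s => exists_mem_eq_sup' univ_nonempty
    (fun a => r s a + γ * ∑ s', P s a s' * v s')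
  exact ⟨π, funext fun s => ((hπ s).2).symm⟩

lemma IsStochastic.Topt_le_add_norm (hP : IsStochastic P) (hγ : 0 ≤ γ) (u w : S → ℝ) (s : S) :
    Topt P r γ u s ≤ Topt P r γ w s + γ * ‖u - w‖ :=
  sup'_le _ _ fun a _ =>
    (hP.Tpol_le_add_norm hγ (fun _ => a) u w s).trans (by grw [Tpol_le_Topt])

lemma IsStochastic.Topt_le_Tpol_of_greedy (hP : IsStochastic P) (hγ : 0 ≤ γ) {π : S → A}
    {v e : S → ℝ} (hg : Tpol P r γ π (v + e) = Topt P r γ (v + e)) (s : S) :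
    Topt P r γ v s ≤ Tpol P r γ π v s + 2 * γ * ‖e‖ :=
  calc Topt P r γ v s ≤ Tpol P r γ π (v + e) s + γ * ‖e‖ := by
        simpa [hg] using hP.Topt_le_add_norm hγ v (v + e) s
    _ ≤ Tpol P r γ π v s + γ * ‖e‖ + γ * ‖e‖ := by
        gcongr
        simpa using hP.Tpol_le_add_norm hγ π (v + e) v s
    _ = Tpol P r γ π v s + 2 * γ * ‖e‖ := by ring

end Optimality

section Iteration

omit [DecidableEq S]

variable {P : S → A → S → ℝ} {r : S → A → ℝ} {γ : ℝ}

lemma IsStochastic.Tpol_sub_le_of_periodic (hP : IsStochastic P) (hγ : 0 ≤ γ) {m : ℕ}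
    (hγm : γ ^ m < 1) {πs : ℕ → S → A} {k : ℕ} {v v' : S → ℝ} {δ : ℝ}
    (hv : Tcomp P r γ πs k m v = v) (hv' : Tcomp P r γ πs (k + 1) m v' = v')
    (hδ : ∀ s, Topt P r γ v s ≤ Tpol P r γ (πs (k + 1)) v s + δ) (s : S) :
    Tpol P r γ (πs (k + 1)) v s - v' s ≤ γ ^ m * δ / (1 - γ ^ m) := by
  set y : S → ℝ := Tpol P r γ (πs (k + 1)) v - v'
  have hy : ∀ s, y s = Gap P γ πs (k + 1) m (Tpol P r γ (πs (k + 1 - m)) v - v') s := by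
    intro s
    have h : Tpol P r γ (πs (k + 1)) v
        = Tcomp P r γ πs (k + 1) m (Tpol P r γ (πs (k + 1 - m)) v) := by
      conv_lhs => rw [← hv]
      exact Tcomp_succ_eq_Tcomp_Tpol πs m (k + 1) v
    rw [show y s = _ - v' s from rfl, h, Tcomp_eq_add_Gap πs m (k + 1) _ v' s, hv']
    ring
  obtain ⟨s₀, hs₀⟩ := Finite.exists_max y
  have hz : ∀ s, (Tpol P r γ (πs (k + 1 - m)) v - v') s ≤ y s₀ + δ := fun s => by
    have := Tpol_le_Topt (P := P) (r := r) (γ := γ) (πs (k + 1 - m)) v s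
    have := hs₀ s
    simp only [y, Pi.sub_apply] at *
    linarith [hδ s]
  have hmax : y s₀ ≤ γ ^ m * (y s₀ + δ) := (hy s₀).le.trans (hP.Gap_le hγ πs hz m (k + 1) s₀)
  refine (hs₀ s).trans ?_
  rw [le_div_iff₀ (sub_pos.2 hγm)]
  linarith

lemma IsStochastic.norm_sub_le_of_greedy (hP : IsStochastic P) (hγ : 0 ≤ γ) {m : ℕ}
    (hγm : γ ^ m < 1) {πs : ℕ → S → A} {k : ℕ} {v v' e vstar : S → ℝ}
    (hv : Tcomp P r γ πs k m v = v) (hv' : Tcomp P r γ πs (k + 1) m v' = v')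
    (hg : Tpol P r γ (πs (k + 1)) (v + e) = Topt P r γ (v + e))
    (hstar : Topt P r γ vstar = vstar) (hle : ∀ s, v' s ≤ vstar s) :
    ‖vstar - v'‖ ≤ γ * ‖vstar - v‖ + 2 * γ * ‖e‖ / (1 - γ ^ m) := by
  have h1m : 0 < 1 - γ ^ m := sub_pos.2 hγm
  have hδ := hP.Topt_le_Tpol_of_greedy hγ hg
  obtain ⟨πstar, hπstar⟩ := exists_Tpol_eq_Topt (P := P) (r := r) (γ := γ) vstar
  refine (pi_norm_le_iff_of_nonneg (by positivity)).2 fun s => ?_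
  rw [Pi.sub_apply, Real.norm_eq_abs, abs_of_nonneg (sub_nonneg.2 (hle s))]
  have hstar_le : vstar s ≤ Topt P r γ v s + γ * ‖vstar - v‖ :=
    calc vstar s = Tpol P r γ πstar vstar s := by rw [hπstar, hstar]
      _ ≤ Tpol P r γ πstar v s + γ * ‖vstar - v‖ := hP.Tpol_le_add_norm hγ _ _ _ s
      _ ≤ Topt P r γ v s + γ * ‖vstar - v‖ := by grw [Tpol_le_Topt]
  have hgap := hP.Tpol_sub_le_of_periodic hγ hγm hv hv' hδ s
  have hsum : 2 * γ * ‖e‖ + γ ^ m * (2 * γ * ‖e‖) / (1 - γ ^ m) = 2 * γ * ‖e‖ / (1 - γ ^ m) := by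
    field_simp
    ring
  linarith [hδ s]

end Iteration

lemma le_pow_mul_add_mul_geom_sum {x : ℕ → ℝ} {a c : ℝ} (ha : 0 ≤ a)
    (h : ∀ n, x (n + 1) ≤ a * x n + c) : ∀ n, x n ≤ a ^ n * x 0 + c * ∑ i ∈ range n, a ^ i
  | 0 => by simp
  | n + 1 =>
    calc x (n + 1) ≤ a * x n + c := h n
      _ ≤ a * (a ^ n * x 0 + c * ∑ i ∈ range n, a ^ i) + c := by
          grw [le_pow_mul_add_mul_geom_sum ha h n]
      _ = a ^ (n + 1) * x 0 + c * ∑ i ∈ range (n + 1), a ^ i := by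
          rw [geom_sum_succ]
          ring

theorem api_fixed_period_bound_general (P : S → A → S → ℝ) (r : S → A → ℝ) (γ : ℝ)
    (hP : IsStochastic P) (hγ0 : 0 < γ) (hγ1 : γ < 1)
    (πs : ℕ → S → A) (m : ℕ) (hm : 1 ≤ m)
    (vkm : ℕ → S → ℝ) (εf : ℕ → S → ℝ) (ε : ℝ)
    (hfix : ∀ k : ℕ, m ≤ k → Tcomp P r γ πs k m (vkm k) = vkm k)
    (hgreedy : ∀ k : ℕ, m ≤ k →
      Tpol P r γ (πs (k+1)) (vkm k + εf k) = Topt P r γ (vkm k + εf k))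
    (herr : ∀ k : ℕ, ‖εf k‖ ≤ ε)
    (vstar : S → ℝ) (hstar : Topt P r γ vstar = vstar)
    (hle : ∀ k : ℕ, m ≤ k → ∀ s, vkm k s ≤ vstar s) :
    ∀ k : ℕ, m ≤ k →
      ‖vstar - vkm k‖ ≤ γ ^ (k - m) * ‖vstar - vkm m‖
        + 2 * (γ - γ ^ (k + 1 - m)) / ((1 - γ) * (1 - γ ^ m)) * ε := by
  intro k hk
  have hγm : γ ^ m < 1 := pow_lt_one₀ hγ0.le hγ1 (by omega)
  have h1m : 0 < 1 - γ ^ m := sub_pos.2 hγm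
  have hstep : ∀ n, ‖vstar - vkm (m + n + 1)‖
      ≤ γ * ‖vstar - vkm (m + n)‖ + 2 * γ * ε / (1 - γ ^ m) := fun n =>
    (hP.norm_sub_le_of_greedy hγ0.le hγm (hfix (m + n) (by omega)) (hfix (m + n + 1) (by omega))
      (hgreedy (m + n) (by omega)) hstar (hle (m + n + 1) (by omega))).trans (by
        grw [herr (m + n)])
  obtain ⟨n, rfl⟩ := Nat.exists_eq_add_of_le hk
  have hrec := le_pow_mul_add_mul_geom_sum (x := fun n => ‖vstar - vkm (m + n)‖) hγ0.le hstep n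
  rw [add_zero] at hrec
  rw [show m + n - m = n by omega, show m + n + 1 - m = n + 1 by omega]
  refine hrec.trans_eq ?_
  rw [geom_sum_eq hγ1.ne]
  have h1γ : 1 - γ ≠ 0 := (sub_pos.2 hγ1).ne'
  have hγ1' : γ - 1 ≠ 0 := (sub_neg.2 hγ1).ne
  field_simp
  ring

/-- Fixed-period API performance bound: for all `k ≥ m`,
`‖v_* − v_{π_{k,m}}‖ ≤ γ^{k−m} ‖v_* − v_{π_{m,m}}‖ + 2(γ − γ^{k+1−m})/((1 − γ)(1 − γ^m)) ε`. -/
theorem api_fixed_period_bound (P : S → A → S → ℝ) (r : S → A → ℝ) (γ : ℝ)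
    (hP : IsStochastic P) (hγ0 : 0 < γ) (hγ1 : γ < 1)
    (πs : ℕ → S → A) (m : ℕ) (hm : 1 ≤ m)
    (vkm : ℕ → S → ℝ) (εf : ℕ → S → ℝ) (ε : ℝ) (hε : 0 ≤ ε)
    (hfix : ∀ k : ℕ, m ≤ k → Tcomp P r γ πs k m (vkm k) = vkm k)
    (hgreedy : ∀ k : ℕ, m ≤ k →
      Tpol P r γ (πs (k+1)) (vkm k + εf k) = Topt P r γ (vkm k + εf k))
    (herr : ∀ k : ℕ, ‖εf k‖ ≤ ε)
    (vstar : S → ℝ) (hstar : Topt P r γ vstar = vstar)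
    (hle : ∀ k : ℕ, m ≤ k → ∀ s, vkm k s ≤ vstar s) :
    ∀ k : ℕ, m ≤ k →
      ‖vstar - vkm k‖ ≤ γ ^ (k - m) * ‖vstar - vkm m‖
        + 2 * (γ - γ ^ (k + 1 - m)) / ((1 - γ) * (1 - γ ^ m)) * ε :=
  api_fixed_period_bound_general P r γ hP hγ0 hγ1 πs m hm vkm εf ε hfix hgreedy herr vstar hstar hle
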